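/- arXiv:2402.06845 — 7 statements merged into one kernel-verified Lean document; each statement's English description precedes it below -/
import Mathlib

section
/- Let C be a circuit of a matroid M with |C| ≥ 3, and let B be a base of M with |C \ B| = 1. Set F = {(B ∪ C) \ {p} : p ∈ C}. If B' is a base of M such that |B'' \ B'| ≤ 1 for every B'' ∈ F, then B' ∈ F. -/
open Finset

/-- A matroid on a finite ground set, given by its independent sets
satisfying the axioms (I1)-(I3). -/
structure FinMatroid (α : Type*) [DecidableEq α] where
  E : Finset α
  Indep : Finset α → Prop
  indep_empty : Indep ∅
  subset_ground : ∀ ⦃I⦄, Indep I → I ⊆ E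
  indep_subset : ∀ ⦃I J⦄, Indep I → J ⊆ I → Indep J
  indep_aug : ∀ ⦃I J⦄, Indep I → Indep J → I.card < J.card →
    ∃ e ∈ J, e ∉ I ∧ Indep (insert e I)

namespace FinMatroid

variable {α : Type*} [DecidableEq α]

/-- A base is a maximal independent set. -/
def Base (M : FinMatroid α) (B : Finset α) : Prop :=
  M.Indep B ∧ ∀ ⦃I⦄, M.Indep I → B ⊆ I → I = B

/-- A circuit is a minimal dependent subset of the ground set. -/
def Circuit (M : FinMatroid α) (C : Finset α) : Prop :=
  C ⊆ M.E ∧ ¬ M.Indep C ∧ ∀ ⦃D⦄, D ⊂ C → M.Indep D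

/-- The rank of a set: the largest cardinality of an independent subset. -/
noncomputable def rank (M : FinMatroid α) (A : Finset α) : ℕ := by
  classical exact (A.powerset.filter M.Indep).sup Finset.card

/-- The Tutte polynomial of a matroid, evaluated at `x`, `y`. -/
noncomputable def tutte {R : Type*} [CommRing R] (M : FinMatroid α) (x y : R) : R :=
  ∑ A ∈ M.E.powerset,
    (x - 1) ^ (M.rank M.E - M.rank A) * (y - 1) ^ (A.card - M.rank A)

end FinMatroid

open FinMatroid in
/-- With `C` a circuit, `|C| ≥ 3`, `B` a base, `|C \ B| = 1`, and
`F = {(B ∪ C) \ {p} : p ∈ C}` : if a base `B'` satisfies `|B'' \ B'| ≤ 1`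
for every `B'' ∈ F`, then `B' ∈ F`. -/
theorem stmt3 {α : Type*} [DecidableEq α] (M : FinMatroid α)
    {B C B' : Finset α} (hB : M.Base B) (hC : M.Circuit C)
    (h3 : 3 ≤ C.card) (h1 : (C \ B).card = 1)
    (hB' : M.Base B')
    (hle : ∀ B'' ∈ C.image (fun p => (B ∪ C).erase p), (B'' \ B').card ≤ 1) :
    B' ∈ C.image (fun p => (B ∪ C).erase p) := by
  classical
  -- all bases have the same cardinality
  have base_card_eq : ∀ {B₁ B₂ : Finset α}, M.Base B₁ → M.Base B₂ →
      B₁.card = B₂.card := by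
    have key : ∀ {B₁ B₂ : Finset α}, M.Base B₁ → M.Base B₂ →
        ¬ B₁.card < B₂.card := by
      intro B₁ B₂ h₁ h₂ hlt
      obtain ⟨e, _, heB₁, hind⟩ := M.indep_aug h₁.1 h₂.1 hlt
      have := h₁.2 hind (Finset.subset_insert e B₁)
      exact heB₁ (this ▸ Finset.mem_insert_self e B₁)
    intro B₁ B₂ h₁ h₂
    exact le_antisymm (not_lt.mp (key h₂ h₁)) (not_lt.mp (key h₁ h₂))
  set A := B ∪ C with hA
  have hCA : C ⊆ A := Finset.subset_union_right
  have hAcard : A.card = B.card + 1 := by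
    have := Finset.card_sdiff_add_card (s := C) (t := B)
    rw [h1] at this
    rw [hA, Finset.union_comm, ← this, add_comm]
  have hB'card : B'.card = B.card := base_card_eq hB' hB
  -- the difference D = A \ B' has at most one element
  have hD : (A \ B').card ≤ 1 := by
    by_contra hcon
    push_neg at hcon
    obtain ⟨a, ha, b, hb, hab⟩ := Finset.one_lt_card.mp hcon
    have hCex : ∃ p ∈ C, p ≠ a ∧ p ≠ b := by
      by_contra hno
      push_neg at hno
      have hsub : C ⊆ {a, b} := by
        intro x hx
        by_cases hx' : x = a
        · simp [hx']
        · simp [hno x hx hx']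
      have := Finset.card_le_card hsub
      have h2 : ({a, b} : Finset α).card ≤ 2 := Finset.card_insert_le _ _ |>.trans (by simp)
      omega
    obtain ⟨p, hpC, hpa, hpb⟩ := hCex
    have hmem : A.erase p ∈ C.image (fun p => (B ∪ C).erase p) :=
      Finset.mem_image.mpr ⟨p, hpC, rfl⟩
    have h2 : 1 < (A.erase p \ B').card := by
      refine Finset.one_lt_card.mpr ⟨a, ?_, b, ?_, hab⟩
      · simp only [Finset.mem_sdiff, Finset.mem_erase] at ha ⊢
        exact ⟨⟨Ne.symm hpa, ha.1⟩, ha.2⟩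
      · simp only [Finset.mem_sdiff, Finset.mem_erase] at hb ⊢
        exact ⟨⟨Ne.symm hpb, hb.1⟩, hb.2⟩
    exact absurd (hle _ hmem) (not_le.mpr h2)
  interval_cases h : (A \ B').card
  · -- A ⊆ B', so C ⊆ B', contradicting that C is dependent
    have hAB' : A ⊆ B' := by
      intro x hx
      by_contra hx'
      have : x ∈ A \ B' := Finset.mem_sdiff.mpr ⟨hx, hx'⟩
      rw [Finset.card_eq_zero.mp h] at this
      exact absurd this (Finset.notMem_empty x)
    exact absurd (M.indep_subset hB'.1 (hCA.trans hAB')) hC.2.1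
  · obtain ⟨p₀, hp₀⟩ := Finset.card_eq_one.mp h
    have hp₀A : p₀ ∈ A := by
      have : p₀ ∈ A \ B' := hp₀ ▸ Finset.mem_singleton_self p₀
      exact (Finset.mem_sdiff.mp this).1
    have hsub : A.erase p₀ ⊆ B' := by
      intro x hx
      rw [Finset.mem_erase] at hx
      by_contra hx'
      have : x ∈ A \ B' := Finset.mem_sdiff.mpr ⟨hx.2, hx'⟩
      rw [hp₀] at this
      exact hx.1 (Finset.mem_singleton.mp this)
    have hcard : (A.erase p₀).card = B'.card := by
      rw [Finset.card_erase_of_mem hp₀A, hAcard, hB'card]; omega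
    have hEq : A.erase p₀ = B' :=
      Finset.eq_of_subset_of_card_le hsub (le_of_eq hcard.symm)
    have hp₀C : p₀ ∈ C := by
      by_contra hp₀C
      have hCB' : C ⊆ B' := by
        intro x hx
        exact hEq ▸ Finset.mem_erase.mpr ⟨fun h => hp₀C (h ▸ hx), hCA hx⟩
      exact absurd (M.indep_subset hB'.1 hCB') hC.2.1
    exact Finset.mem_image.mpr ⟨p₀, hp₀C, hEq⟩
end

section
/- If a matroid M has a circuit of at least three elements, then for every base B of M there exists a circuit C with |C| ≥ 3 such that |C \ B| = 1. -/
open Finset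

namespace FinMatroid

variable {α : Type*} [DecidableEq α] {M : FinMatroid α}

lemma indep_of_subset_circuit_card_lt {C D : Finset α} (hC : M.Circuit C)
    (hsub : D ⊆ C) (hlt : D.card < C.card) : M.Indep D :=
  hC.2.2 (hsub.ssubset_of_ne (fun h => absurd (h ▸ hlt) (lt_irrefl _)))

lemma exists_circuit_of_dep :
    ∀ X : Finset α, X ⊆ M.E → ¬ M.Indep X → ∃ C, C ⊆ X ∧ M.Circuit C := by
  intro X
  induction X using Finset.strongInduction with
  | _ X ih =>
    intro hXE hX
    by_cases h : ∀ ⦃D⦄, D ⊂ X → M.Indep D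
    · exact ⟨X, subset_rfl, hXE, hX, h⟩
    · push_neg at h
      obtain ⟨D, hD, hDdep⟩ := h
      obtain ⟨C, hCD, hC⟩ := ih D hD (hD.subset.trans hXE) hDdep
      exact ⟨C, hCD.trans hD.subset, hC⟩

lemma circuit_elim {C₁ C₂ : Finset α} (h₁ : M.Circuit C₁) (h₂ : M.Circuit C₂)
    (hne : C₁ ≠ C₂) {x : α} (hx₁ : x ∈ C₁) (hx₂ : x ∈ C₂) :
    ¬ M.Indep ((C₁ ∪ C₂).erase x) := by
  classical
  intro hD
  -- pick g ∈ C₁ \ C₂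
  have hg : ∃ g ∈ C₁, g ∉ C₂ := by
    by_contra hcon
    push_neg at hcon
    exact h₁.2.1 (h₂.2.2 ((Finset.subset_iff.mpr hcon).ssubset_of_ne hne))
  obtain ⟨g, hgC₁, hgC₂⟩ := hg
  set X := C₁ ∪ C₂ with hXdef
  set S := X.powerset.filter (fun I => M.Indep I ∧ C₁.erase g ⊆ I) with hSdef
  have hmem : C₁.erase g ∈ S := by
    rw [hSdef, Finset.mem_filter, Finset.mem_powerset]
    exact ⟨(Finset.erase_subset _ _).trans Finset.subset_union_left,
      h₁.2.2 (Finset.erase_ssubset hgC₁), subset_rfl⟩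
  obtain ⟨I, hIS, hImax⟩ := Finset.exists_max_image S Finset.card ⟨_, hmem⟩
  rw [hSdef, Finset.mem_filter, Finset.mem_powerset] at hIS
  obtain ⟨hIX, hIindep, hIerase⟩ := hIS
  have hgI : g ∉ I := by
    intro hgI
    have : C₁ ⊆ I := by
      intro y hy
      by_cases hyg : y = g
      · exact hyg ▸ hgI
      · exact hIerase (Finset.mem_erase.mpr ⟨hyg, hy⟩)
    exact h₁.2.1 (M.indep_subset hIindep this)
  have hh : ∃ h ∈ C₂, h ∉ I := by
    by_contra hcon
    push_neg at hcon
    exact h₂.2.1 (M.indep_subset hIindep (Finset.subset_iff.mpr hcon))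
  obtain ⟨h, hhC₂, hhI⟩ := hh
  have hgh : g ≠ h := fun e => hgC₂ (e ▸ hhC₂)
  have hgX : g ∈ X := Finset.mem_union_left _ hgC₁
  have hhX : h ∈ X := Finset.mem_union_right _ hhC₂
  have hxX : x ∈ X := Finset.mem_union_left _ hx₁
  have hIsub : I ⊆ (X.erase g).erase h := by
    intro y hy
    exact Finset.mem_erase.mpr ⟨fun e => hhI (e ▸ hy),
      Finset.mem_erase.mpr ⟨fun e => hgI (e ▸ hy), hIX hy⟩⟩
  have hcard1 : I.card ≤ X.card - 2 := by
    have := Finset.card_le_card hIsub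
    rwa [Finset.card_erase_of_mem (Finset.mem_erase.mpr ⟨(Ne.symm hgh), hhX⟩),
      Finset.card_erase_of_mem hgX] at this
  have hcard2 : (X.erase x).card = X.card - 1 := Finset.card_erase_of_mem hxX
  have hXcard : 2 ≤ X.card := by
    have : ({g, h} : Finset α) ⊆ X := by
      intro y hy
      rcases Finset.mem_insert.mp hy with rfl | hy
      · exact hgX
      · exact (Finset.mem_singleton.mp hy) ▸ hhX
    have := Finset.card_le_card this
    rwa [Finset.card_pair hgh] at this
  have hlt : I.card < (X.erase x).card := by omega
  obtain ⟨z, hzD, hzI, hzind⟩ := M.indep_aug hIindep hD hlt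
  have hzS : insert z I ∈ S := by
    rw [hSdef, Finset.mem_filter, Finset.mem_powerset]
    refine ⟨Finset.insert_subset ((Finset.erase_subset _ _) hzD) hIX, hzind,
      hIerase.trans (Finset.subset_insert _ _)⟩
  have := hImax _ hzS
  rw [Finset.card_insert_of_notMem hzI] at this
  omega

lemma key (M : FinMatroid α) {B : Finset α} (hB : M.Base B) :
    ∀ n : ℕ, ∀ C : Finset α, M.Circuit C → 3 ≤ C.card → (C \ B).card ≤ n →
    ∃ C', M.Circuit C' ∧ 3 ≤ C'.card ∧ (C' \ B).card = 1 := by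
  intro n
  induction n with
  | zero =>
    intro C hC h3 hcard
    exfalso
    have hsub : C ⊆ B := by
      intro y hy
      by_contra hyB
      have : y ∈ C \ B := Finset.mem_sdiff.mpr ⟨hy, hyB⟩
      have := Finset.card_pos.mpr ⟨y, this⟩
      omega
    exact hC.2.1 (M.indep_subset hB.1 hsub)
  | succ n ih =>
    intro C hC h3 hcard
    by_cases hle : (C \ B).card ≤ n
    · exact ih C hC h3 hle
    push_neg at hle
    by_cases h1 : (C \ B).card = 1
    · exact ⟨C, hC, h3, h1⟩
    have hcard2 : 2 ≤ (C \ B).card := by omega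
    obtain ⟨e, he⟩ := Finset.card_pos.mp (by omega : 0 < (C \ B).card)
    have heC : e ∈ C := (Finset.mem_sdiff.mp he).1
    have heB : e ∉ B := (Finset.mem_sdiff.mp he).2
    -- fundamental circuit of e
    have hdep : ¬ M.Indep (insert e B) := by
      intro hind
      exact heB ((hB.2 hind (Finset.subset_insert _ _)) ▸ Finset.mem_insert_self e B)
    obtain ⟨Ce, hCesub, hCe⟩ := exists_circuit_of_dep (insert e B)
      (Finset.insert_subset (hC.1 heC) (M.subset_ground hB.1)) hdep
    have heCe : e ∈ Ce := by
      by_contra hcon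
      have : Ce ⊆ B := fun y hy => by
        rcases Finset.mem_insert.mp (hCesub hy) with rfl | hyB
        · exact absurd hy hcon
        · exact hyB
      exact hCe.2.1 (M.indep_subset hB.1 this)
    rcases lt_or_ge Ce.card 3 with hlt3 | hge3
    swap
    · -- Ce is the desired circuit
      refine ⟨Ce, hCe, hge3, ?_⟩
      have : Ce \ B = {e} := by
        apply Finset.Subset.antisymm
        · intro y hy
          rcases Finset.mem_sdiff.mp hy with ⟨hy1, hy2⟩
          rcases Finset.mem_insert.mp (hCesub hy1) with rfl | hyB
          · exact Finset.mem_singleton_self _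
          · exact absurd hyB hy2
        · intro y hy
          rw [Finset.mem_singleton.mp hy]
          exact Finset.mem_sdiff.mpr ⟨heCe, heB⟩
      rw [this, Finset.card_singleton]
    -- Ce has card 1 or 2
    have hCe12 : Ce.card = 1 ∨ Ce.card = 2 := by
      have := Finset.card_pos.mpr ⟨e, heCe⟩
      omega
    rcases hCe12 with hcard1 | hcard2'
    · -- loop: contradiction
      exfalso
      obtain ⟨a, ha⟩ := Finset.card_eq_one.mp hcard1
      have hae : a = e := by
        have := heCe; rw [ha, Finset.mem_singleton] at this; exact this.symm
      have : M.Indep {e} := indep_of_subset_circuit_card_lt hC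
        (Finset.singleton_subset_iff.mpr heC) (by rw [Finset.card_singleton]; omega)
      exact hCe.2.1 (by rwa [ha, hae])
    · -- Ce = {e, f} with f ∈ B
      obtain ⟨f, hf⟩ := Finset.card_eq_one.mp (by
        rw [Finset.card_erase_of_mem heCe, hcard2'] : (Ce.erase e).card = 1)
      have hfCe : f ∈ Ce := (Finset.erase_subset _ _) (hf ▸ Finset.mem_singleton_self f)
      have hfe : f ≠ e := (Finset.mem_erase.mp (hf ▸ Finset.mem_singleton_self f)).1
      have hCeef : Ce = {e, f} := by
        apply Finset.Subset.antisymm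
        · intro y hy
          by_cases hye : y = e
          · exact Finset.mem_insert.mpr (Or.inl hye)
          · have : y ∈ Ce.erase e := Finset.mem_erase.mpr ⟨hye, hy⟩
            rw [hf, Finset.mem_singleton] at this
            exact Finset.mem_insert.mpr (Or.inr (this ▸ Finset.mem_singleton_self f))
        · intro y hy
          rcases Finset.mem_insert.mp hy with rfl | hy
          · exact heCe
          · exact (Finset.mem_singleton.mp hy) ▸ hfCe
      have hfB : f ∈ B := by
        rcases Finset.mem_insert.mp (hCesub hfCe) with h' | h'
        · exact absurd h' hfe
        · exact h'
      have hfC : f ∉ C := by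
        intro hfC
        have hsub : Ce ⊆ C := by
          rw [hCeef]
          intro y hy
          rcases Finset.mem_insert.mp hy with rfl | hy
          · exact heC
          · exact (Finset.mem_singleton.mp hy) ▸ hfC
        exact hCe.2.1 (indep_of_subset_circuit_card_lt hC hsub (by omega))
      have hCne : C ≠ Ce := fun h' => hfC (h' ▸ hfCe)
      -- eliminate e from C and Ce
      have hDdep : ¬ M.Indep ((C ∪ Ce).erase e) := circuit_elim hC hCe hCne heC heCe
      have hDE : (C ∪ Ce).erase e ⊆ M.E :=
        (Finset.erase_subset _ _).trans (Finset.union_subset hC.1 hCe.1)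
      obtain ⟨C'', hC''sub, hC''⟩ := exists_circuit_of_dep _ hDE hDdep
      -- members of C'' : y ≠ e and (y ∈ C or y = f)
      have hmemC'' : ∀ y ∈ C'', y ≠ e ∧ (y ∈ C ∨ y = f) := by
        intro y hy
        have := hC''sub hy
        rw [Finset.mem_erase, Finset.mem_union] at this
        refine ⟨this.1, ?_⟩
        rcases this.2 with h' | h'
        · exact Or.inl h'
        · rw [hCeef, Finset.mem_insert, Finset.mem_singleton] at h'
          rcases h' with h' | h'
          · exact absurd h' this.1
          · exact Or.inr h'
      have hC''B : C'' \ B ⊆ (C \ B).erase e := by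
        intro y hy
        rcases Finset.mem_sdiff.mp hy with ⟨hy1, hy2⟩
        obtain ⟨hye, hyCf⟩ := hmemC'' y hy1
        rcases hyCf with hyC | rfl
        · exact Finset.mem_erase.mpr ⟨hye, Finset.mem_sdiff.mpr ⟨hyC, hy2⟩⟩
        · exact absurd hfB hy2
      have hC''Bcard : (C'' \ B).card ≤ n := by
        have := Finset.card_le_card hC''B
        rw [Finset.card_erase_of_mem he] at this
        omega
      rcases lt_or_ge C''.card 3 with hlt3' | hge3'
      · exfalso
        -- C'' has card 1 or 2
        have hC''ne : (C'' \ B).Nonempty := by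
          rw [Finset.nonempty_iff_ne_empty]
          intro hemp
          have hsub : C'' ⊆ B := fun y hy => by
            by_contra hyB
            have : y ∈ C'' \ B := Finset.mem_sdiff.mpr ⟨hy, hyB⟩
            rw [hemp] at this
            exact absurd this (Finset.notMem_empty y)
          exact hC''.2.1 (M.indep_subset hB.1 hsub)
        obtain ⟨g, hg⟩ := hC''ne
        rcases Finset.mem_sdiff.mp hg with ⟨hgC'', hgB⟩
        obtain ⟨hge, hgCf⟩ := hmemC'' g hgC''
        have hgC : g ∈ C := by
          rcases hgCf with h' | rfl
          · exact h'
          · exact absurd hfB hgB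
        have hgf : g ≠ f := fun h' => hgB (h' ▸ hfB)
        have hC''12 : C''.card = 1 ∨ C''.card = 2 := by
          have := Finset.card_pos.mpr ⟨g, hgC''⟩
          omega
        rcases hC''12 with hc1 | hc2
        · -- loop g
          obtain ⟨a, ha⟩ := Finset.card_eq_one.mp hc1
          have hag : a = g := by
            have := hgC''; rw [ha, Finset.mem_singleton] at this; exact this.symm
          have : M.Indep {g} := indep_of_subset_circuit_card_lt hC
            (Finset.singleton_subset_iff.mpr hgC) (by rw [Finset.card_singleton]; omega)
          exact hC''.2.1 (by rwa [ha, hag])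
        · -- C'' = {g, h}
          obtain ⟨h', hh'⟩ := Finset.card_eq_one.mp (by
            rw [Finset.card_erase_of_mem hgC'', hc2] : (C''.erase g).card = 1)
          have hh'C'' : h' ∈ C'' := (Finset.erase_subset _ _) (hh' ▸ Finset.mem_singleton_self h')
          have hh'g : h' ≠ g := (Finset.mem_erase.mp (hh' ▸ Finset.mem_singleton_self h')).1
          have hC''gh : C'' = {g, h'} := by
            apply Finset.Subset.antisymm
            · intro y hy
              by_cases hyg : y = g
              · exact Finset.mem_insert.mpr (Or.inl hyg)
              · have : y ∈ C''.erase g := Finset.mem_erase.mpr ⟨hyg, hy⟩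
                rw [hh', Finset.mem_singleton] at this
                exact Finset.mem_insert.mpr (Or.inr (this ▸ Finset.mem_singleton_self h'))
            · intro y hy
              rcases Finset.mem_insert.mp hy with rfl | hy
              · exact hgC''
              · exact (Finset.mem_singleton.mp hy) ▸ hh'C''
          obtain ⟨hh'e, hh'Cf⟩ := hmemC'' h' hh'C''
          -- h' must be f
          have hh'f : h' = f := by
            rcases hh'Cf with hh'C | hh'f
            · exfalso
              have hsub : C'' ⊆ C := by
                rw [hC''gh]
                intro y hy
                rcases Finset.mem_insert.mp hy with rfl | hy
                · exact hgC
                · exact (Finset.mem_singleton.mp hy) ▸ hh'C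
              exact hC''.2.1 (indep_of_subset_circuit_card_lt hC hsub (by omega))
            · exact hh'f
          -- now eliminate f from Ce = {e,f} and C'' = {g,f}
          have hCene : Ce ≠ C'' := by
            intro h''
            have : e ∈ C'' := h'' ▸ heCe
            exact (hmemC'' e this).1 rfl
          have hfC'' : f ∈ C'' := hh'f ▸ hh'C''
          have helim : ¬ M.Indep ((Ce ∪ C'').erase f) := circuit_elim hCe hC'' hCene hfCe hfC''
          apply helim
          have hsub2 : (Ce ∪ C'').erase f ⊆ {e, g} := by
            intro y hy
            rw [Finset.mem_erase, Finset.mem_union] at hy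
            obtain ⟨hyf, hy2⟩ := hy
            rcases hy2 with h'' | h''
            · rw [hCeef, Finset.mem_insert, Finset.mem_singleton] at h''
              rcases h'' with rfl | h''
              · exact Finset.mem_insert_self _ _
              · exact absurd h'' hyf
            · rw [hC''gh, Finset.mem_insert, Finset.mem_singleton] at h''
              rcases h'' with rfl | h''
              · exact Finset.mem_insert.mpr (Or.inr (Finset.mem_singleton_self _))
              · rw [h'', hh'f] at hyf; exact absurd rfl hyf
          have heg : M.Indep ({e, g} : Finset α) := by
            apply indep_of_subset_circuit_card_lt hC
            · intro y hy
              rcases Finset.mem_insert.mp hy with rfl | hy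
              · exact heC
              · exact (Finset.mem_singleton.mp hy) ▸ hgC
            · have : ({e, g} : Finset α).card ≤ 2 := Finset.card_insert_le _ _ |>.trans (by simp)
              omega
          exact M.indep_subset heg hsub2
      · exact ih C'' hC'' hge3' hC''Bcard

end FinMatroid

open FinMatroid in
/-- If a matroid has a circuit with at least three elements, then for every base `B`
there is a circuit `C` with `|C| ≥ 3` and `|C \ B| = 1`. -/
theorem stmt4 {α : Type*} [DecidableEq α] (M : FinMatroid α)
    (h : ∃ C, M.Circuit C ∧ 3 ≤ C.card) :
    ∀ B, M.Base B → ∃ C, M.Circuit C ∧ 3 ≤ C.card ∧ (C \ B).card = 1 := by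
  obtain ⟨C, hC, h3⟩ := h
  intro B hB
  exact FinMatroid.key M hB (C \ B).card C hC h3 le_rfl
end

section
/- Let B be a base of a non-separable (connected) matroid M and let C be a circuit of M with |C \ B| = 1. If B \ C is nonempty, then M has another base B' such that |C \ B'| = 1 and |B \ B'| ≥ 2. -/
/-!
Write `C \ B = {e}`. If some `x ∉ B ∪ C` and `f ∈ C ∩ B` make `C - f + x` independent, any base
containing `C - f + x` avoids `f` and contains both `e` and `x`, so it is the required `B'`.
Otherwise `M` splits off a single element: `C = {e}` is a loop when `C ∩ B = ∅`, and else `C - f`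
spans everything outside `B \ C`, so the independent set `B - f - z + e` of size `|B| - 1`
spans `E - z`, which makes each `z ∈ B \ C` a coloop.
-/

open Finset

/-- A matroid is separable if its ground set splits into two nonempty disjoint parts
such that a set is independent iff its intersections with the two parts are. -/
def FinMatroid.Separable {α : Type*} [DecidableEq α] (M : FinMatroid α) : Prop :=
  ∃ E₁ E₂ : Finset α, E₁.Nonempty ∧ E₂.Nonempty ∧ Disjoint E₁ E₂ ∧ E₁ ∪ E₂ = M.E ∧
    ∀ I ⊆ M.E, (M.Indep I ↔ M.Indep (I ∩ E₁) ∧ M.Indep (I ∩ E₂))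
namespace FinMatroid

variable {α : Type*} [DecidableEq α] {M : FinMatroid α} {B C I J : Finset α} {e f z : α}

def IsLoop (M : FinMatroid α) (e : α) : Prop :=
  e ∈ M.E ∧ ¬ M.Indep {e}

def IsColoop (M : FinMatroid α) (z : α) : Prop :=
  z ∈ M.E ∧ ∀ ⦃I⦄, M.Indep I → M.Indep (insert z I)

theorem exists_indep_superset_of_card_le (hI : M.Indep I) (hJ : M.Indep J)
    (hIJ : I.card ≤ J.card) : ∃ K, I ⊆ K ∧ K ⊆ I ∪ J ∧ M.Indep K ∧ K.card = J.card := by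
  induction h : J.card - I.card generalizing I with
  | zero => exact ⟨I, subset_rfl, subset_union_left, hI, by omega⟩
  | succ n ih =>
    obtain ⟨x, hxJ, hxI, hx⟩ := M.indep_aug hI hJ (by omega)
    have hcard : (insert x I).card = I.card + 1 := card_insert_of_notMem hxI
    obtain ⟨K, hIK, hKIJ, hK, hKJ⟩ := ih hx (by omega) (by omega)
    refine ⟨K, (subset_insert x I).trans hIK, hKIJ.trans ?_, hK, hKJ⟩
    exact union_subset (insert_subset (mem_union_right I hxJ) subset_union_left) subset_union_right

theorem Base.card_le (hB : M.Base B) (hI : M.Indep I) : I.card ≤ B.card := by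
  by_contra! h
  obtain ⟨x, -, hxB, hx⟩ := M.indep_aug hB.1 hI h
  exact hxB (hB.2 hx (subset_insert x B) ▸ mem_insert_self x B)

theorem Base.exists_base_superset (hB : M.Base B) (hI : M.Indep I) :
    ∃ B', M.Base B' ∧ I ⊆ B' ∧ B'.card = B.card := by
  obtain ⟨K, hIK, -, hK, hKB⟩ := exists_indep_superset_of_card_le hI hB.1 (hB.card_le hI)
  refine ⟨K, ⟨hK, fun J hJ hKJ => ?_⟩, hIK, hKB⟩
  exact (eq_of_subset_of_card_le hKJ (hKB ▸ hB.card_le hJ)).symm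

theorem Circuit.not_subset_of_indep (hC : M.Circuit C) (hI : M.Indep I) : ¬ C ⊆ I :=
  fun h => hC.2.1 (M.indep_subset hI h)

theorem Circuit.indep_insert_erase (hC : M.Circuit C) (hB : M.Indep B) (hCB : C ⊆ insert e B)
    (hf : f ∈ C) (hfe : f ≠ e) : M.Indep (insert e (B.erase f)) := by
  have heB : e ∉ B := fun he => hC.not_subset_of_indep hB (insert_eq_of_mem he ▸ hCB)
  have hfB : f ∈ B := mem_of_mem_insert_of_ne (hCB hf) hfe
  have hCf : C.erase f ⊆ insert e (B.erase f) := by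
    intro c hc
    rcases mem_insert.1 (hCB (mem_of_mem_erase hc)) with rfl | hcB
    · exact mem_insert_self c _
    · exact mem_insert_of_mem (mem_erase.2 ⟨ne_of_mem_erase hc, hcB⟩)
  -- Augmenting `C - f` from `B` up to size `|B|` cannot add `f`, so it yields all of `B - f + e`.
  have hcard : (insert e (B.erase f)).card = B.card := by
    rw [card_insert_of_notMem (fun h => heB (mem_of_mem_erase h)), card_erase_of_mem hfB]
    have := card_pos.2 ⟨f, hfB⟩
    omega
  obtain ⟨K, hCK, hKCB, hK, hKB⟩ := exists_indep_superset_of_card_le (hC.2.2 (erase_ssubset hf))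
    hB (hcard ▸ card_le_card hCf)
  have hfK : f ∉ K := fun h => hC.not_subset_of_indep hK (by
    rw [← insert_erase hf]; exact insert_subset h hCK)
  have hK' : K ⊆ insert e (B.erase f) := by
    intro k hk
    rcases mem_union.1 (hKCB hk) with hkC | hkB
    · exact hCf hkC
    · exact mem_insert_of_mem (mem_erase.2 ⟨fun h => hfK (h ▸ hk), hkB⟩)
  exact eq_of_subset_of_card_le hK' (hcard.trans hKB.symm).le ▸ hK

theorem isColoop_of_forall_card_lt (hB : M.Indep B) (hzB : z ∈ B)
    (h : ∀ L, M.Indep L → z ∉ L → L.card < B.card) : M.IsColoop z := by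
  refine ⟨M.subset_ground hB hzB, fun I hI => ?_⟩
  by_cases hzI : z ∈ I
  · rwa [insert_eq_of_mem hzI]
  obtain ⟨K, hIK, -, hK, hKB⟩ :=
    exists_indep_superset_of_card_le hI hB (h I hI hzI).le
  have hzK : z ∈ K := by
    by_contra hzK
    exact (h K hK hzK).ne hKB
  exact M.indep_subset hK (insert_subset hzK hIK)

/-- `K = B - f - z + e` is independent of size `|B| - 1`; augmenting it by an element `y` of a
larger independent set avoiding `z` would make `C - f + y` independent with `y ∉ B ∪ C`. -/
theorem isColoop_of_forall_not_indep_insert_erase (hB : M.Indep B) (hC : M.Circuit C)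
    (hCB : C ⊆ insert e B) (heB : e ∉ B) (hf : f ∈ C ∩ B) (hz : z ∈ B \ C)
    (h : ∀ y, y ∉ B → y ≠ e → ¬ M.Indep (insert y (C.erase f))) : M.IsColoop z := by
  obtain ⟨hfC, hfB⟩ := mem_inter.1 hf
  obtain ⟨hzB, hzC⟩ := mem_sdiff.1 hz
  have hfe : f ≠ e := fun h => heB (h ▸ hfB)
  have hze : z ≠ e := fun h => heB (h ▸ hzB)
  have hzf : z ≠ f := fun h => hzC (h ▸ hfC)
  set K := (insert e (B.erase f)).erase z
  have hK : M.Indep K := M.indep_subset (hC.indep_insert_erase hB hCB hfC hfe) (erase_subset _ _)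
  have hKcard : K.card + 1 = B.card := by
    have := card_pos.2 ⟨f, hfB⟩
    rw [card_erase_of_mem (mem_insert_of_mem (mem_erase.2 ⟨hzf, hzB⟩)),
      card_insert_of_notMem (fun h => heB (mem_of_mem_erase h)), card_erase_of_mem hfB]
    omega
  have hCK : C.erase f ⊆ K := by
    intro c hc
    have hcz : c ≠ z := fun h => hzC (h ▸ mem_of_mem_erase hc)
    rcases mem_insert.1 (hCB (mem_of_mem_erase hc)) with rfl | hcB
    · exact mem_erase.2 ⟨hcz, mem_insert_self c _⟩
    · exact mem_erase.2 ⟨hcz, mem_insert_of_mem (mem_erase.2 ⟨ne_of_mem_erase hc, hcB⟩)⟩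
  refine isColoop_of_forall_card_lt hB hzB fun L hL hzL => ?_
  by_contra! hLB
  obtain ⟨y, hyL, hyK, hy⟩ := M.indep_aug hK hL (by omega)
  have hyf : y ≠ f := by
    rintro rfl
    exact hC.not_subset_of_indep hy
      ((insert_erase hfC).symm.subset.trans (insert_subset_insert y hCK))
  have hye : y ≠ e := fun h => hyK (h ▸ mem_erase.2 ⟨hze.symm, mem_insert_self e _⟩)
  have hyB : y ∉ B := fun hyB => hyK (mem_erase.2 ⟨fun h => hzL (h ▸ hyL),
    mem_insert_of_mem (mem_erase.2 ⟨hyf, hyB⟩)⟩)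
  exact h y hyB hye (M.indep_subset hy (insert_subset_insert y hCK))

theorem separable_of_singleton (hz : z ∈ M.E) (hE : (M.E.erase z).Nonempty)
    (h : ∀ I ⊆ M.E, M.Indep (I ∩ {z}) → M.Indep (I ∩ M.E.erase z) → M.Indep I) :
    M.Separable := by
  refine ⟨{z}, M.E.erase z, singleton_nonempty z, hE,
    disjoint_singleton_left.2 (notMem_erase z M.E), by rw [← insert_eq, insert_erase hz],
    fun I hIE => ⟨fun hI => ?_, fun hI => h I hIE hI.1 hI.2⟩⟩
  exact ⟨M.indep_subset hI inter_subset_left, M.indep_subset hI inter_subset_left⟩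

theorem IsLoop.separable (he : M.IsLoop e) (hE : (M.E.erase e).Nonempty) : M.Separable := by
  refine separable_of_singleton he.1 hE fun I hIE hIe hI => ?_
  have heI : e ∉ I := fun heI => he.2 (inter_singleton_of_mem heI ▸ hIe)
  rwa [inter_eq_left.2 fun x hx => mem_erase.2 ⟨ne_of_mem_of_not_mem hx heI, hIE hx⟩] at hI

theorem IsColoop.separable (hz : M.IsColoop z) (hE : (M.E.erase z).Nonempty) : M.Separable := by
  refine separable_of_singleton hz.1 hE fun I hIE _ hI => M.indep_subset (hz.2 hI) ?_
  intro x hx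
  by_cases hxz : x = z
  · exact hxz ▸ mem_insert_self x _
  · exact mem_insert_of_mem (mem_inter.2 ⟨hx, mem_erase.2 ⟨hxz, hIE hx⟩⟩)

theorem Base.exists_base_of_indep_insert_erase {x : α} (hB : M.Base B) (hC : M.Circuit C)
    (hCB : C \ B = {e}) (hxB : x ∉ B) (hxe : x ≠ e) (hf : f ∈ C ∩ B)
    (hx : M.Indep (insert x (C.erase f))) :
    ∃ B', M.Base B' ∧ B' ≠ B ∧ (C \ B').card = 1 ∧ 2 ≤ (B \ B').card := by
  obtain ⟨heC, heB⟩ := mem_sdiff.1 (hCB ▸ mem_singleton_self e)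
  obtain ⟨hfC, hfB⟩ := mem_inter.1 hf
  obtain ⟨B', hB', hsub, hcard⟩ := hB.exists_base_superset hx
  have hCB' : C.erase f ⊆ B' := (subset_insert x _).trans hsub
  have heB' : e ∈ B' := hCB' (mem_erase.2 ⟨fun h => heB (h ▸ hfB), heC⟩)
  have hfB' : f ∉ B' := fun hfB' =>
    hC.not_subset_of_indep hB'.1 ((insert_erase hfC).symm.subset.trans (insert_subset hfB' hCB'))
  have hC_sdiff : C \ B' = {f} := by
    ext c
    simp only [mem_sdiff, mem_singleton]
    refine ⟨fun ⟨hc, hcB'⟩ => by_contra fun hcf => hcB' (hCB' (mem_erase.2 ⟨hcf, hc⟩)), ?_⟩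
    rintro rfl
    exact ⟨hfC, hfB'⟩
  refine ⟨B', hB', fun h => heB (h ▸ heB'), by rw [hC_sdiff, card_singleton], ?_⟩
  rw [card_sdiff_comm hcard.symm]
  calc 2 = ({e, x} : Finset α).card := (card_pair hxe.symm).symm
    _ ≤ (B' \ B).card := card_le_card (insert_subset (mem_sdiff.2 ⟨heB', heB⟩)
        (singleton_subset_iff.2 (mem_sdiff.2 ⟨hsub (mem_insert_self x _), hxB⟩)))

end FinMatroid

open FinMatroid in
/-- In a non-separable matroid, if `B` is a base and `C` a circuit with `|C \ B| = 1`
and `B \ C ≠ ∅`, then there is another base `B'` with `|C \ B'| = 1` and `|B \ B'| ≥ 2`. -/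
theorem stmt5 {α : Type*} [DecidableEq α] (M : FinMatroid α)
    (hconn : ¬ M.Separable) {B C : Finset α}
    (hB : M.Base B) (hC : M.Circuit C) (h1 : (C \ B).card = 1)
    (hne : (B \ C).Nonempty) :
    ∃ B', M.Base B' ∧ B' ≠ B ∧ (C \ B').card = 1 ∧ 2 ≤ (B \ B').card := by
  obtain ⟨e, hCB⟩ := card_eq_one.1 h1
  obtain ⟨heC, heB⟩ := mem_sdiff.1 (hCB ▸ mem_singleton_self e)
  by_cases hx : ∃ x f, x ∉ B ∧ x ≠ e ∧ f ∈ C ∩ B ∧ M.Indep (insert x (C.erase f))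
  · obtain ⟨x, f, hxB, hxe, hf, hx⟩ := hx
    exact hB.exists_base_of_indep_insert_erase hC hCB hxB hxe hf hx
  push Not at hx
  obtain ⟨z, hz⟩ := hne
  have hze : z ≠ e := fun h => heB (h ▸ (mem_sdiff.1 hz).1)
  have hzE : z ∈ M.E := M.subset_ground hB.1 (mem_sdiff.1 hz).1
  have heE : e ∈ M.E := hC.1 heC
  refine absurd ?_ hconn
  rcases (C ∩ B).eq_empty_or_nonempty with hCB_empty | ⟨f, hf⟩
  · have hCe : C = {e} := by
      rwa [sdiff_eq_self_of_disjoint (disjoint_iff_inter_eq_empty.2 hCB_empty)] at hCB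
    exact IsLoop.separable ⟨heE, hCe ▸ hC.2.1⟩ ⟨z, mem_erase.2 ⟨hze, hzE⟩⟩
  · have hCsub : C ⊆ insert e B := by rw [insert_eq]; exact sdiff_le_iff'.1 hCB.le
    have hz : M.IsColoop z := isColoop_of_forall_not_indep_insert_erase hB.1 hC hCsub heB hf hz
      fun y hyB hye => hx y f hyB hye hf
    exact hz.separable ⟨e, mem_erase.2 ⟨hze.symm, heE⟩⟩
end

section
/- For n ≥ 3, let E = {1,...,2n}, X1 = {1,...,n}, X3 = ({n+1,...,2n} ∪ {n}) \ {2n}, and let Q_{2n} be the set system on E whose maximal sets are all n-element subsets of E except X1 and X3. Then Q_{2n} is a matroid. -/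
open Finset

/-- The independence predicate of `Q_{2n}`. -/
def qIndep (n : ℕ) (I : Finset ℕ) : Prop :=
  I ⊆ Finset.Icc 1 (2 * n) ∧ I.card ≤ n ∧ I ≠ Finset.Icc 1 n ∧ I ≠ Finset.Icc n (2 * n - 1)

lemma cardX1 (n : ℕ) : (Finset.Icc 1 n).card = n := by
  rw [Nat.card_Icc]; omega

lemma cardX3 (n : ℕ) (hn : 3 ≤ n) : (Finset.Icc n (2 * n - 1)).card = n := by
  rw [Nat.card_Icc]; omega

lemma qIndep_subset (n : ℕ) (hn : 3 ≤ n) : ∀ ⦃I J : Finset ℕ⦄, qIndep n I → J ⊆ I →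
    qIndep n J := by
  intro I J hI hJI
  have hle := Finset.card_le_card hJI
  have hIn := hI.2.1
  refine ⟨hJI.trans hI.1, by omega, ?_, ?_⟩
  · intro h
    have hc : I.card ≤ J.card := by rw [h, cardX1]; exact hI.2.1
    exact hI.2.2.1 ((Finset.eq_of_subset_of_card_le hJI hc).symm ▸ h)
  · intro h
    have hc : I.card ≤ J.card := by rw [h, cardX3 n hn]; exact hI.2.1
    exact hI.2.2.2 ((Finset.eq_of_subset_of_card_le hJI hc).symm ▸ h)

lemma qAug (n : ℕ) (hn : 3 ≤ n) : ∀ ⦃I J : Finset ℕ⦄, qIndep n I → qIndep n J →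
    I.card < J.card → ∃ e ∈ J, e ∉ I ∧ qIndep n (insert e I) := by
  intro I J hI hJ hcard
  have hJn := hJ.2.1
  by_contra hcon
  push_neg at hcon
  have hins : ∀ e ∈ J \ I,
      insert e I = Finset.Icc 1 n ∨ insert e I = Finset.Icc n (2 * n - 1) := by
    intro e he
    rw [Finset.mem_sdiff] at he
    have h1 : insert e I ⊆ Finset.Icc 1 (2 * n) := Finset.insert_subset (hJ.1 he.1) hI.1
    have h2 : (insert e I).card = I.card + 1 := Finset.card_insert_of_notMem he.2
    have h3 := hcon e he.1 he.2
    by_contra h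
    push_neg at h
    exact h3 ⟨h1, by rw [h2]; omega, h.1, h.2⟩
  have hne : (J \ I).Nonempty := by
    rw [Finset.sdiff_nonempty]
    intro h
    have := Finset.card_le_card h
    omega
  obtain ⟨e, he⟩ := hne
  have heJ := Finset.mem_sdiff.mp he
  have hecard : I.card + 1 = n := by
    rcases hins e he with h | h
    · have := congrArg Finset.card h
      rw [Finset.card_insert_of_notMem heJ.2, cardX1] at this; omega
    · have := congrArg Finset.card h
      rw [Finset.card_insert_of_notMem heJ.2, cardX3 n hn] at this; omega
  have hJcard : J.card = n := by have := hJ.2.1; omega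
  by_cases hone : (J \ I).card = 1
  · -- then J = insert e I, contradicting J ≠ X1, X3
    obtain ⟨a, ha⟩ := Finset.card_eq_one.mp hone
    have hea : e = a := by have := ha ▸ he; simpa using this
    have hJsub : J ⊆ insert e I := by
      intro x hx
      by_cases hxI : x ∈ I
      · exact Finset.mem_insert_of_mem hxI
      · have : x ∈ J \ I := Finset.mem_sdiff.mpr ⟨hx, hxI⟩
        rw [ha, Finset.mem_singleton] at this
        rw [this, ← hea]; exact Finset.mem_insert_self _ _
    have hJeq : J = insert e I := Finset.eq_of_subset_of_card_le hJsub
      (by rw [Finset.card_insert_of_notMem heJ.2]; omega)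
    rcases hins e he with h | h
    · exact hJ.2.2.1 (hJeq.trans h)
    · exact hJ.2.2.2 (hJeq.trans h)
  · -- there is a second element f
    have h2le : 2 ≤ (J \ I).card := by
      have := Finset.card_pos.mpr ⟨e, he⟩
      omega
    obtain ⟨f, hf, hfe⟩ := Finset.exists_mem_ne (show 1 < (J \ I).card by omega) e
    have hfJ := Finset.mem_sdiff.mp hf
    have hnein : insert e I ≠ insert f I := by
      intro h
      have : e ∈ insert f I := h ▸ Finset.mem_insert_self e I
      rcases Finset.mem_insert.mp this with h' | h'
      · exact hfe h'.symm
      · exact heJ.2 h'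
    -- I is contained in both X1 and X3
    have hsub : I ⊆ Finset.Icc 1 n ∧ I ⊆ Finset.Icc n (2 * n - 1) := by
      rcases hins e he with h1 | h1 <;> rcases hins f hf with h2 | h2
      · exact absurd (h1.trans h2.symm) hnein
      · exact ⟨h1 ▸ Finset.subset_insert e I, h2 ▸ Finset.subset_insert f I⟩
      · exact ⟨h2 ▸ Finset.subset_insert f I, h1 ▸ Finset.subset_insert e I⟩
      · exact absurd (h1.trans h2.symm) hnein
    have hIsing : I ⊆ {n} := by
      intro x hx
      have h1 := Finset.mem_Icc.mp (hsub.1 hx)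
      have h2 := Finset.mem_Icc.mp (hsub.2 hx)
      rw [Finset.mem_singleton]; omega
    have := Finset.card_le_card hIsing
    rw [Finset.card_singleton] at this
    omega

lemma qB0 (n : ℕ) (hn : 3 ≤ n) : qIndep n (Finset.Icc (n + 1) (2 * n)) ∧
    (Finset.Icc (n + 1) (2 * n)).card = n := by
  have hc : (Finset.Icc (n + 1) (2 * n)).card = n := by rw [Nat.card_Icc]; omega
  refine ⟨⟨Finset.Icc_subset_Icc (by omega) le_rfl, by omega, ?_, ?_⟩, hc⟩
  · intro h
    have : n + 1 ∈ Finset.Icc 1 n := h ▸ Finset.mem_Icc.mpr ⟨by omega, by omega⟩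
    have := Finset.mem_Icc.mp this; omega
  · intro h
    have : 2 * n ∈ Finset.Icc n (2 * n - 1) := h ▸ Finset.mem_Icc.mpr ⟨by omega, by omega⟩
    have := Finset.mem_Icc.mp this; omega

lemma qExtend (n : ℕ) (hn : 3 ≤ n) : ∀ k (I : Finset ℕ), qIndep n I → I.card + k = n →
    ∃ B, qIndep n B ∧ I ⊆ B ∧ B.card = n := by
  intro k
  induction k with
  | zero => exact fun I hI h => ⟨I, hI, subset_rfl, by omega⟩
  | succ k ih =>
    intro I hI h
    obtain ⟨hB0, hB0c⟩ := qB0 n hn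
    obtain ⟨e, _, heI, hins⟩ := qAug n hn hI hB0 (by omega)
    obtain ⟨B, hB, hsub, hc⟩ := ih (insert e I) hins
      (by rw [Finset.card_insert_of_notMem heI]; omega)
    exact ⟨B, hB, (Finset.subset_insert _ _).trans hsub, hc⟩

open FinMatroid in
/-- For `n ≥ 3`, the independence system `Q_{2n}` on `{1,…,2n}`, whose independent
sets are the subsets of the `n`-element subsets other than `X₁ = {1,…,n}` and
`X₃ = {n,…,2n-1}`, is a matroid. -/
theorem stmt11 (n : ℕ) (hn : 3 ≤ n) :
    ∃ M : FinMatroid ℕ, M.E = Finset.Icc 1 (2 * n) ∧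
      ∀ I, M.Indep I ↔ ∃ B ⊆ Finset.Icc 1 (2 * n), B.card = n ∧
        B ≠ Finset.Icc 1 n ∧ B ≠ Finset.Icc n (2 * n - 1) ∧ I ⊆ B := by
  refine ⟨⟨Finset.Icc 1 (2 * n), qIndep n, ?_, fun I hI => hI.1, qIndep_subset n hn,
    qAug n hn⟩, rfl, ?_⟩
  · refine ⟨Finset.empty_subset _, by simp, ?_, ?_⟩
    · intro h
      have : (0:ℕ) = n := by
        have := congrArg Finset.card h; rw [Finset.card_empty, cardX1] at this; omega
      omega
    · intro h
      have : (0:ℕ) = n := by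
        have := congrArg Finset.card h
        rw [Finset.card_empty, cardX3 n hn] at this; omega
      omega
  · intro I
    constructor
    · intro hI
      obtain ⟨B, hB, hsub, hc⟩ := qExtend n hn (n - I.card) I hI (by have := hI.2.1; omega)
      exact ⟨B, hB.1, hc, hB.2.2.1, hB.2.2.2, hsub⟩
    · rintro ⟨B, hBE, hBc, h1, h3, hIB⟩
      exact qIndep_subset n hn ⟨hBE, by omega, h1, h3⟩ hIB
end

section
/- For n ≥ 3, the independence systems S_{4n} and S'_{4n} are matroids. -/
open Finset

/-- The circuital loose cycle `F₁` on `Z_{4n}`. -/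
def memF1 (n : ℕ) (C : Finset (ZMod (4 * n))) : Prop :=
  (∃ i : ℕ, i ≤ n - 2 ∧
      C = {((2 * i : ℕ) : ZMod (4 * n)), ((2 * i + 1 : ℕ) : ZMod (4 * n)),
           ((2 * i + 2 : ℕ) : ZMod (4 * n))}) ∨
    C = {((2 * n - 2 : ℕ) : ZMod (4 * n)), ((2 * n - 1 : ℕ) : ZMod (4 * n)), 0}

/-- The circuital loose cycle `F₂` on `Z_{4n}`. -/
def memF2 (n : ℕ) (C : Finset (ZMod (4 * n))) : Prop :=
  (∃ i : ℕ, n ≤ i ∧ i ≤ 2 * n - 2 ∧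
      C = {((2 * i : ℕ) : ZMod (4 * n)), ((2 * i + 1 : ℕ) : ZMod (4 * n)),
           ((2 * i + 2 : ℕ) : ZMod (4 * n))}) ∨
    C = {((4 * n - 2 : ℕ) : ZMod (4 * n)), ((4 * n - 1 : ℕ) : ZMod (4 * n)),
         ((2 * n : ℕ) : ZMod (4 * n))}

/-- The circuital loose path `F₃` on `Z_{4n}`. -/
def memF3 (n : ℕ) (C : Finset (ZMod (4 * n))) : Prop :=
  ∃ i : ℕ, i ≤ n - 1 ∧
    C = {((2 * i : ℕ) : ZMod (4 * n)), ((2 * i + 1 : ℕ) : ZMod (4 * n)),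
         ((2 * i + 2 : ℕ) : ZMod (4 * n))}

/-- The circuital loose path `F₄` on `Z_{4n}`. -/
def memF4 (n : ℕ) (C : Finset (ZMod (4 * n))) : Prop :=
  ∃ i : ℕ, n ≤ i ∧ i ≤ 2 * n - 1 ∧
    C = {((2 * i : ℕ) : ZMod (4 * n)), ((2 * i + 1 : ℕ) : ZMod (4 * n)),
         ((2 * i + 2 : ℕ) : ZMod (4 * n))}

/-- Independence in `S_{4n}`: subsets of size at most `2`, and `3`-sets that are
not removed triples. -/
def IndepS (n : ℕ) (I : Finset (ZMod (4 * n))) : Prop :=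
  I.card ≤ 2 ∨ (I.card = 3 ∧ ¬ memF1 n I ∧ ¬ memF2 n I)

/-- Independence in `S'_{4n}`. -/
def IndepS' (n : ℕ) (I : Finset (ZMod (4 * n))) : Prop :=
  I.card ≤ 2 ∨ (I.card = 3 ∧ ¬ memF3 n I ∧ ¬ memF4 n I)

/-! Removing from the `3`-sets a family `F` of triples, no two of which share two elements,
leaves a (sparse paving) matroid: when augmenting a `2`-set `I`, two distinct candidates
`insert e I` and `insert e' I` share `I`, so they cannot both lie in `F`.
Every removed triple is `{2i, 2i+1, c i}` with `c i` even, so two of them sharing two elements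
would share both even elements, i.e. `i ↦ c i / 2` would have a `2`-cycle. The triples form loose
cycles of lengths `n`, `n` (for `S_{4n}`) and `2n` (for `S'_{4n}`), and these have no `2`-cycle
once `n ≥ 3`. -/

namespace FinMatroid

variable {α : Type*} [DecidableEq α]

theorem insert_notMem_or_insert_notMem {r : ℕ} {F : Set (Finset α)}
    (hF : ∀ ⦃T T'⦄, T ∈ F → T' ∈ F → T ≠ T' → #(T ∩ T') + 2 ≤ r)
    {I : Finset α} (hI : #I + 1 = r) {e e' : α} (he : e ∉ I) (hee' : e ≠ e') :
    insert e I ∉ F ∨ insert e' I ∉ F := by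
  by_contra! ⟨hT, hT'⟩
  have hne : insert e I ≠ insert e' I := fun h ↦ by
    have : e ∈ insert e' I := h ▸ mem_insert_self e I
    simp_all
  have := card_le_card (subset_inter (subset_insert e I) (subset_insert e' I))
  have := hF hT hT' hne
  omega

/-- The sparse paving matroid of rank `r` whose non-bases among the `r`-sets are the members
of `F`. -/
def sparsePaving [Fintype α] (r : ℕ) (hr : 0 < r) (F : Set (Finset α))
    (hF : ∀ ⦃T T'⦄, T ∈ F → T' ∈ F → T ≠ T' → #(T ∩ T') + 2 ≤ r) : FinMatroid α where
  E := univ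
  Indep I := #I < r ∨ (#I = r ∧ I ∉ F)
  indep_empty := Or.inl (by simpa using hr)
  subset_ground I _ := subset_univ I
  indep_subset I J hI hJI := by
    have hcard := card_le_card hJI
    by_cases hJ : #J < r
    · exact Or.inl hJ
    · have hJ_eq : J = I := eq_of_subset_of_card_le hJI (by omega)
      exact hJ_eq ▸ hI
  indep_aug I J hI hJ hIJ := by
    have hIr : #I < r := by omega
    obtain ⟨e, heJ, heI⟩ := exists_mem_notMem_of_card_lt_card hIJ
    have hcard : ∀ {a}, a ∉ I → #(insert a I) = #I + 1 := card_insert_of_notMem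
    by_cases hsmall : #I + 1 < r
    · exact ⟨e, heJ, heI, Or.inl (by rw [hcard heI]; exact hsmall)⟩
    have hJr : #J = r := by omega
    by_cases hsub : I ⊆ J
    · have hJ_eq : insert e I = J :=
        eq_of_subset_of_card_le (insert_subset heJ hsub) (by rw [hcard heI]; omega)
      exact ⟨e, heJ, heI, hJ_eq ▸ hJ⟩
    · have hinter : #(J ∩ I) < #I :=
        card_lt_card <| ssubset_of_subset_of_ne inter_subset_right
          fun h ↦ hsub (h ▸ inter_subset_left)
      have hsd : 1 < #(J \ I) := by
        have := card_sdiff_add_card_inter J I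
        omega
      obtain ⟨a, ha, b, hb, hab⟩ := one_lt_card.mp hsd
      rw [mem_sdiff] at ha hb
      rcases insert_notMem_or_insert_notMem hF (by omega) ha.2 hab with h | h
      · exact ⟨a, ha.1, ha.2, Or.inr ⟨by rw [hcard ha.2]; omega, h⟩⟩
      · exact ⟨b, hb.1, hb.2, Or.inr ⟨by rw [hcard hb.2]; omega, h⟩⟩

end FinMatroid

theorem ZMod.val_eq_or_of_mem_triple {m a b c : ℕ} (ha : a < m) (hb : b < m) (hc : c < m)
    {x : ZMod m} (hx : x ∈ ({(a : ZMod m), (b : ZMod m), (c : ZMod m)} : Finset (ZMod m))) :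
    x.val = a ∨ x.val = b ∨ x.val = c := by
  simp only [mem_insert, mem_singleton] at hx
  rcases hx with rfl | rfl | rfl <;> simp [Nat.mod_eq_of_lt, *]

namespace LooseCycle

def triple (n i c : ℕ) : Finset (ZMod (4 * n)) :=
  {((2 * i : ℕ) : ZMod (4 * n)), ((2 * i + 1 : ℕ) : ZMod (4 * n)), ((c : ℕ) : ZMod (4 * n))}

theorem card_inter_triple_le_one {n : ℕ} {c : ℕ → ℕ}
    (hc : ∀ i < 2 * n, c i < 4 * n ∧ c i % 2 = 0)
    (hc_swap : ∀ i < 2 * n, ∀ j < 2 * n, c i = 2 * j → c j = 2 * i → i = j)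
    {i j : ℕ} (hi : i < 2 * n) (hj : j < 2 * n) (hne : triple n i (c i) ≠ triple n j (c j)) :
    #(triple n i (c i) ∩ triple n j (c j)) ≤ 1 := by
  have : NeZero (4 * n) := ⟨by omega⟩
  have hij : i ≠ j := by rintro rfl; exact hne rfl
  have hmem : ∀ {k x}, k < 2 * n → x ∈ triple n k (c k) →
      x.val = 2 * k ∨ x.val = 2 * k + 1 ∨ x.val = c k := fun hk ↦
    ZMod.val_eq_or_of_mem_triple (by omega) (by omega) (hc _ hk).1
  refine card_le_one.mpr fun x hx y hy ↦ ZMod.val_injective _ ?_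
  rw [mem_inter] at hx hy
  have := hmem hi hx.1; have := hmem hj hx.2; have := hmem hi hy.1; have := hmem hj hy.2
  have := hc i hi; have := hc j hj; have := hc_swap i hi j hj
  omega

/-- The third vertices of the two loose cycles of `S_{4n}`, on `{0, …, 2n-1}` and
`{2n, …, 4n-1}`. -/
def endS (n i : ℕ) : ℕ :=
  if i = n - 1 then 0 else if i = 2 * n - 1 then 2 * n else 2 * i + 2

/-- The third vertices of the single loose cycle of `S'_{4n}`. -/
def endS' (n i : ℕ) : ℕ :=
  if i = 2 * n - 1 then 0 else 2 * i + 2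

theorem exists_eq_triple_endS {n : ℕ} (hn : 2 ≤ n) {T : Finset (ZMod (4 * n))}
    (hT : memF1 n T ∨ memF2 n T) : ∃ i < 2 * n, T = triple n i (endS n i) := by
  rcases hT with (⟨i, hi, rfl⟩ | rfl) | (⟨i, hi, hi', rfl⟩ | rfl)
  · exact ⟨i, by omega, by rw [endS, if_neg (by omega), if_neg (by omega)]; rfl⟩
  · refine ⟨n - 1, by omega, ?_⟩
    rw [endS, if_pos rfl, triple, show 2 * (n - 1) = 2 * n - 2 by omega,
      show 2 * n - 2 + 1 = 2 * n - 1 by omega, Nat.cast_zero]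
  · exact ⟨i, by omega, by rw [endS, if_neg (by omega), if_neg (by omega)]; rfl⟩
  · refine ⟨2 * n - 1, by omega, ?_⟩
    rw [endS, if_neg (by omega), if_pos rfl, triple, show 2 * (2 * n - 1) = 4 * n - 2 by omega,
      show 4 * n - 2 + 1 = 4 * n - 1 by omega]

theorem exists_eq_triple_endS' {n : ℕ} (hn : 1 ≤ n) {T : Finset (ZMod (4 * n))}
    (hT : memF3 n T ∨ memF4 n T) : ∃ i < 2 * n, T = triple n i (endS' n i) := by
  obtain ⟨i, hi, rfl⟩ : ∃ i < 2 * n, T = triple n i (2 * i + 2) := by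
    rcases hT with ⟨i, hi, rfl⟩ | ⟨i, -, hi, rfl⟩ <;> exact ⟨i, by omega, rfl⟩
  refine ⟨i, hi, ?_⟩
  rw [endS']
  split_ifs with h
  · rw [show 2 * i + 2 = 4 * n by omega, triple, triple, ZMod.natCast_self, Nat.cast_zero]
  · rfl

theorem card_inter_le_one_of_memF12 {n : ℕ} (hn : 3 ≤ n) {T T' : Finset (ZMod (4 * n))}
    (hT : memF1 n T ∨ memF2 n T) (hT' : memF1 n T' ∨ memF2 n T') (hne : T ≠ T') :
    #(T ∩ T') ≤ 1 := by
  obtain ⟨i, hi, rfl⟩ := exists_eq_triple_endS (by omega) hT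
  obtain ⟨j, hj, rfl⟩ := exists_eq_triple_endS (by omega) hT'
  refine card_inter_triple_le_one (fun k hk ↦ ?_) (fun k hk l hl ↦ ?_) hi hj hne <;>
    unfold endS <;> split_ifs <;> omega

theorem card_inter_le_one_of_memF34 {n : ℕ} (hn : 2 ≤ n) {T T' : Finset (ZMod (4 * n))}
    (hT : memF3 n T ∨ memF4 n T) (hT' : memF3 n T' ∨ memF4 n T') (hne : T ≠ T') :
    #(T ∩ T') ≤ 1 := by
  obtain ⟨i, hi, rfl⟩ := exists_eq_triple_endS' (by omega) hT
  obtain ⟨j, hj, rfl⟩ := exists_eq_triple_endS' (by omega) hT'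
  refine card_inter_triple_le_one (fun k hk ↦ ?_) (fun k hk l hl ↦ ?_) hi hj hne <;>
    unfold endS' <;> split_ifs <;> omega

end LooseCycle

/-- For `n ≥ 3`, the independence systems `S_{4n}` and `S'_{4n}` are matroids. -/
theorem stmt14 (n : ℕ) (hn : 3 ≤ n) :
    (∃ M : FinMatroid (ZMod (4 * n)), (∀ a : ZMod (4 * n), a ∈ M.E) ∧
      ∀ I, M.Indep I ↔ IndepS n I) ∧
    (∃ M : FinMatroid (ZMod (4 * n)), (∀ a : ZMod (4 * n), a ∈ M.E) ∧
      ∀ I, M.Indep I ↔ IndepS' n I) := by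
  have : NeZero (4 * n) := ⟨by omega⟩
  refine ⟨⟨FinMatroid.sparsePaving 3 three_pos {T | memF1 n T ∨ memF2 n T}
      (fun T T' hT hT' hne ↦
        Nat.add_le_add_right (LooseCycle.card_inter_le_one_of_memF12 hn hT hT' hne) 2),
      mem_univ, fun I ↦ ?_⟩,
    ⟨FinMatroid.sparsePaving 3 three_pos {T | memF3 n T ∨ memF4 n T}
      (fun T T' hT hT' hne ↦
        Nat.add_le_add_right (LooseCycle.card_inter_le_one_of_memF34 (by omega) hT hT' hne) 2),
      mem_univ, fun I ↦ ?_⟩⟩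
  · simp only [FinMatroid.sparsePaving, IndepS, Set.mem_ofPred_eq, not_or, Nat.lt_succ_iff]
  · simp only [FinMatroid.sparsePaving, IndepS', Set.mem_ofPred_eq, not_or, Nat.lt_succ_iff]
end

section
/- For every integer n ≥ 3, the 2-fold intersecting cover number of the cycle C_n satisfies ι(C_n) ≤ 2⌈√n⌉. -/
open Finset

/-- A `2`-fold intersecting cover of a graph `G` by a family of `s` vertex sets:
every edge `{u,v}` is the intersection of two distinct members of the family. -/
def TwoFoldCover {V : Type*} [DecidableEq V] (G : SimpleGraph V) {s : ℕ}
    (H : Fin s → Finset V) : Prop :=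
  ∀ u v : V, G.Adj u v → ∃ i j : Fin s, i ≠ j ∧ H i ∩ H j = {u, v}

/-- The `2`-fold intersecting cover number `ι(G)`. -/
noncomputable def coverNumber {V : Type*} [DecidableEq V] (G : SimpleGraph V) : ℕ :=
  sInf {s : ℕ | ∃ H : Fin s → Finset V, TwoFoldCover G H}

/-- The cycle graph `C_n` on `Z_n`, with edges `{i, i+1}`. -/
def cycleGraph (n : ℕ) : SimpleGraph (ZMod n) :=
  SimpleGraph.fromRel (fun u v => v = u + 1)

/-- The path graph `P_{n+1}` on `{0, …, n}`, with edges `{i, i+1}`. -/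
def pathGraph' (n : ℕ) : SimpleGraph (Fin (n + 1)) :=
  SimpleGraph.fromRel (fun u v => (v : ℕ) = (u : ℕ) + 1)

namespace Cyc

def S (n m q : ℕ) : ℕ := (q * n + m - 1) / m
def row (n m i : ℕ) : ℕ := i * m / n
def x (m t : ℕ) : ℕ := if m ≤ t then 0 else if m % 2 = 1 ∧ t = m - 1 then 2 else t % 2
def col (n m i : ℕ) : ℕ :=
  if i - S n m (row n m i) = 0 then x m (row n m i)
  else if i - S n m (row n m i) = S n m (row n m i + 1) - S n m (row n m i) - 1 then
    x m (row n m i + 1)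
  else if i - S n m (row n m i) = 1 then 3 - x m (row n m i) - x m (row n m i + 1)
  else (i - S n m (row n m i)) + 1

variable {n m k i i' q q' t : ℕ}

lemma S_le_iff (hm : 0 < m) : S n m q ≤ i ↔ q * n ≤ m * i := by
  unfold S
  rw [Nat.div_le_iff_le_mul_add_pred hm]
  omega

lemma lt_S_iff (hm : 0 < m) : i < S n m q ↔ m * i < q * n := by
  rw [← Nat.not_le, ← Nat.not_le, S_le_iff hm]

lemma S_zero (hm : 0 < m) : S n m 0 = 0 := by
  unfold S
  rw [Nat.zero_mul, Nat.zero_add]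
  exact Nat.div_eq_of_lt (by omega)

lemma qn_le_mS (hm : 0 < m) : q * n ≤ m * S n m q := (S_le_iff hm).1 le_rfl

lemma mS_le (hm : 0 < m) : m * S n m q ≤ q * n + m - 1 := by
  unfold S
  have h := Nat.div_mul_le_self (q * n + m - 1) m
  have e : m * ((q * n + m - 1) / m) = (q * n + m - 1) / m * m := Nat.mul_comm _ _
  omega

lemma S_m (hm : 0 < m) : S n m m = n := by
  refine le_antisymm ((S_le_iff hm).2 (by rw [Nat.mul_comm])) ?_
  have h := qn_le_mS (n := n) (q := m) hm
  exact Nat.le_of_mul_le_mul_left h hm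

lemma S_mono (hm : 0 < m) (h : q ≤ q') : S n m q ≤ S n m q' := by
  rw [S_le_iff hm]
  calc q * n ≤ q' * n := Nat.mul_le_mul_right n h
    _ ≤ m * S n m q' := qn_le_mS hm

lemma S_step2 (hm : 0 < m) (h2m : 2 * m ≤ n) : S n m q + 2 ≤ S n m (q + 1) := by
  have h1 := mS_le (n := n) (q := q) hm
  rw [show S n m q + 2 = (S n m q + 1) + 1 from rfl, Nat.succ_le_iff, lt_S_iff hm]
  have e1 : m * (S n m q + 1) = m * S n m q + m := by ring
  have e2 : (q + 1) * n = q * n + n := by ring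
  omega

lemma S_step_le (hm : 0 < m) (hnmk : n ≤ m * k) : S n m (q + 1) ≤ S n m q + k := by
  rw [S_le_iff hm]
  have h2 := qn_le_mS (n := n) (q := q) hm
  have e1 : m * (S n m q + k) = m * S n m q + m * k := by ring
  have e2 : (q + 1) * n = q * n + n := by ring
  omega

lemma S_row_le (hn : 0 < n) (hm : 0 < m) : S n m (row n m i) ≤ i := by
  rw [S_le_iff hm]
  calc row n m i * n ≤ i * m := by
        have := Nat.div_mul_le_self (i * m) n
        unfold row; omega
    _ = m * i := Nat.mul_comm _ _

lemma lt_S_row_succ (hn : 0 < n) (hm : 0 < m) : i < S n m (row n m i + 1) := by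
  rw [lt_S_iff hm]
  have h1 := Nat.div_add_mod (i * m) n
  have h2 : i * m % n < n := Nat.mod_lt _ hn
  have e1 : (row n m i + 1) * n = n * (i * m / n) + n := by unfold row; ring
  have e0 : m * i = i * m := Nat.mul_comm _ _
  omega

lemma row_unique (hn : 0 < n) (hm : 0 < m) (h1 : S n m q ≤ i) (h2 : i < S n m (q + 1)) :
    row n m i = q := by
  have ha : q * n ≤ m * i := (S_le_iff hm).1 h1
  have hb : m * i < (q + 1) * n := (lt_S_iff hm).1 h2
  have hc : q ≤ row n m i := by
    rw [row, Nat.le_div_iff_mul_le hn]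
    have e0 : m * i = i * m := Nat.mul_comm _ _
    omega
  have hd : row n m i < q + 1 := by
    rw [row, Nat.div_lt_iff_lt_mul hn]
    have e0 : m * i = i * m := Nat.mul_comm _ _
    have : (q + 1) * n = n * (q + 1) := Nat.mul_comm _ _
    omega
  omega

lemma row_lt (hn : 0 < n) (hm : 0 < m) (hi : i < n) : row n m i < m := by
  rw [row, Nat.div_lt_iff_lt_mul hn]
  calc i * m < n * m := (Nat.mul_lt_mul_right hm).2 hi
    _ = m * n := Nat.mul_comm _ _

lemma x_le : x m t ≤ 2 := by
  unfold x
  split_ifs <;> omega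

lemma x_zero (hm : 2 ≤ m) : x m 0 = 0 := by
  unfold x
  split_ifs <;> omega

lemma x_m : x m m = 0 := by
  unfold x
  split_ifs <;> omega

lemma x_ne (hm : 2 ≤ m) (ht : t < m) : x m t ≠ x m (t + 1) := by
  unfold x
  split_ifs <;> omega

end Cyc

namespace Cyc2
open Cyc

variable {n m k i i' q t : ℕ}

lemma hn_pos (hm2 : 2 ≤ m) (h2m : 2 * m ≤ n) : 0 < n := by omega

lemma x_le_one (hme : m % 2 = 0) : x m t ≤ 1 := by
  unfold x
  split_ifs <;> omega

lemma col_S (hm2 : 2 ≤ m) (h2m : 2 * m ≤ n) (hq : q < m) : col n m (S n m q) = x m q := by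
  have hm : 0 < m := by omega
  have hn : 0 < n := by omega
  have hstep := S_step2 (n := n) (q := q) hm h2m
  have hrow : row n m (S n m q) = q := row_unique hn hm le_rfl (by omega)
  unfold col
  rw [hrow, if_pos (by omega)]

lemma col_last (hm2 : 2 ≤ m) (h2m : 2 * m ≤ n) (hq : q < m) :
    col n m (S n m (q + 1) - 1) = x m (q + 1) := by
  have hm : 0 < m := by omega
  have hn : 0 < n := by omega
  have hstep := S_step2 (n := n) (q := q) hm h2m
  have hrow : row n m (S n m (q + 1) - 1) = q := row_unique hn hm (by omega) (by omega)
  unfold col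
  rw [hrow, if_neg (by omega), if_pos (by omega)]

lemma col_inj (hm2 : 2 ≤ m) (h2m : 2 * m ≤ n) (hi : i < n) (hi' : i' < n)
    (hr : row n m i = row n m i') (hc : col n m i = col n m i') : i = i' := by
  have hm : 0 < m := by omega
  have hn : 0 < n := by omega
  unfold col at hc
  rw [← hr] at hc
  have b1 : S n m (row n m i) ≤ i := S_row_le hn hm
  have b2 : i < S n m (row n m i + 1) := lt_S_row_succ hn hm
  have b1' : S n m (row n m i) ≤ i' := by rw [hr]; exact S_row_le hn hm
  have b2' : i' < S n m (row n m i + 1) := by rw [hr]; exact lt_S_row_succ hn hm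
  have hqlt : row n m i < m := row_lt hn hm hi
  have hstep := S_step2 (n := n) (q := row n m i) hm h2m
  have hxne := x_ne hm2 hqlt
  have hx1 : x m (row n m i) ≤ 2 := x_le
  have hx2 : x m (row n m i + 1) ≤ 2 := x_le
  split_ifs at hc <;> omega

lemma col_lt (hm2 : 2 ≤ m) (h2m : 2 * m ≤ n) (hnmk : n ≤ m * k) (hmk : m ≤ k)
    (hcase : 3 ≤ k ∨ (k = 2 ∧ m % 2 = 0)) (hi : i < n) : col n m i < k := by
  have hm : 0 < m := by omega
  have hn : 0 < n := by omega
  have b1 : S n m (row n m i) ≤ i := S_row_le hn hm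
  have b2 : i < S n m (row n m i + 1) := lt_S_row_succ hn hm
  have hqlt : row n m i < m := row_lt hn hm hi
  have hstep := S_step2 (n := n) (q := row n m i) hm h2m
  have hstepk := S_step_le (n := n) (q := row n m i) (k := k) hm hnmk
  have hxne := x_ne hm2 hqlt
  have hx1 : x m (row n m i) ≤ 2 := x_le
  have hx2 : x m (row n m i + 1) ≤ 2 := x_le
  have hA : 3 ≤ k ∨ (k = 2 ∧ x m (row n m i) ≤ 1 ∧ x m (row n m i + 1) ≤ 1) := by
    rcases hcase with h | ⟨h1, h2⟩
    · exact Or.inl h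
    · exact Or.inr ⟨h1, x_le_one h2, x_le_one h2⟩
  unfold col
  split_ifs <;> omega

end Cyc2

namespace Cyc
namespace G
open Cyc2

variable (n m : ℕ) [NeZero n]

def e1 (v : ZMod n) : ℕ := (v.val + (n - 1)) % n

def HA (a : ℕ) : Finset (ZMod n) :=
  univ.filter (fun v => row n m (e1 n v) = a ∨ row n m v.val = a)

def HB (b : ℕ) : Finset (ZMod n) :=
  univ.filter (fun v => col n m (e1 n v) = b ∨ col n m v.val = b)

variable {n m}

lemma val_add_one (hn : 2 ≤ n) (u : ZMod n) : (u + 1).val = (u.val + 1) % n := by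
  rw [ZMod.val_add, ZMod.val_one_eq_one_mod, Nat.add_mod_mod]

lemma e1_add_one (hn : 2 ≤ n) (u : ZMod n) : e1 n (u + 1) = u.val := by
  have h := u.val_lt
  rw [e1, val_add_one hn, Nat.mod_add_mod]
  rw [show u.val + 1 + (n - 1) = u.val + n by omega, Nat.add_mod_right, Nat.mod_eq_of_lt h]

lemma e2_from_e1 (hn : 2 ≤ n) (v : ZMod n) : (e1 n v + 1) % n = v.val := by
  have h := v.val_lt
  rw [e1, Nat.mod_add_mod, show v.val + (n - 1) + 1 = v.val + n by omega,
    Nat.add_mod_right, Nat.mod_eq_of_lt h]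

theorem edge_cover (hm2 : 2 ≤ m) (h2m : 2 * m ≤ n) (w : ZMod n) :
    HA n m (row n m w.val) ∩ HB n m (col n m w.val) = {w, w + 1} := by
  have hm : 0 < m := by omega
  have hn : 0 < n := by omega
  have hn2 : 2 ≤ n := by omega
  have hSm : S n m m = n := S_m hm
  have hilt : w.val < n := w.val_lt
  have halt : row n m w.val < m := row_lt hn hm hilt
  ext v
  simp only [HA, HB, mem_inter, mem_filter, mem_univ, true_and, mem_insert, mem_singleton]
  constructor
  · rintro ⟨hra, hcb⟩
    have hj1lt : e1 n v < n := Nat.mod_lt _ hn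
    have hj2lt : v.val < n := v.val_lt
    have hrel : (e1 n v + 1) % n = v.val := e2_from_e1 hn2 v
    have key2 : v.val = w.val → (v = w ∨ v = w + 1) := fun h => Or.inl (ZMod.val_injective n h)
    have key1 : e1 n v = w.val → (v = w ∨ v = w + 1) := by
      intro h
      refine Or.inr (ZMod.val_injective n ?_)
      rw [val_add_one hn2, ← h]
      exact hrel.symm
    -- bounds for i := w.val
    have bi1 : S n m (row n m w.val) ≤ w.val := S_row_le hn hm
    have bi2 : w.val < S n m (row n m w.val + 1) := lt_S_row_succ hn hm
    rcases hra with hr1 | hr2 <;> rcases hcb with hc1 | hc2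
    · exact key1 (col_inj hm2 h2m hj1lt hilt hr1 hc1)
    · -- row (e1 v) = a, col v.val = b : case 3
      by_cases hr2 : row n m v.val = row n m w.val
      · exact key2 (col_inj hm2 h2m hj2lt hilt hr2 hc2)
      · have bj1 : S n m (row n m w.val) ≤ e1 n v := by rw [← hr1]; exact S_row_le hn hm
        have bj2 : e1 n v < S n m (row n m w.val + 1) := by rw [← hr1]; exact lt_S_row_succ hn hm
        by_cases hend : e1 n v + 1 = n
        · -- wrap: v.val = 0
          have hv0 : v.val = 0 := by rw [← hrel, hend, Nat.mod_self]
          have hstepm : S n m (m - 1) + 2 ≤ n := by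
            have h := S_step2 (n := n) (q := m - 1) hm h2m
            rw [Nat.sub_add_cancel (by omega), hSm] at h
            exact h
          have hrn1 : row n m (n - 1) = m - 1 := by
            apply row_unique hn hm (by omega)
            rw [Nat.sub_add_cancel (by omega), hSm]
            omega
          have ham : row n m w.val = m - 1 := by
            rw [show e1 n v = n - 1 by omega] at hr1
            rw [← hr1, hrn1]
          have hc0 : col n m v.val = 0 := by
            have h := col_S (n := n) (q := 0) hm2 h2m (by omega)
            rw [S_zero hm, x_zero hm2] at h
            rw [hv0, h]
          have hclast : col n m (n - 1) = 0 := by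
            have h := col_last (n := n) (q := m - 1) hm2 h2m (by omega)
            rw [Nat.sub_add_cancel (by omega), hSm, x_m] at h
            exact h
          have hieq : w.val = n - 1 := by
            apply col_inj hm2 h2m hilt (show n - 1 < n by omega)
            · rw [hrn1, ham]
            · rw [hclast, ← hc2, hc0]
          exact key1 (by omega)
        · have hv : v.val = e1 n v + 1 := by rw [← hrel, Nat.mod_eq_of_lt (by omega)]
          have hSeq : e1 n v + 1 = S n m (row n m w.val + 1) := by
            by_contra hne
            exact hr2 (hv ▸ row_unique hn hm (by omega) (by omega))
          have ha1 : row n m w.val + 1 < m := by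
            by_contra hle
            have := S_mono (n := n) hm (show m ≤ row n m w.val + 1 by omega)
            omega
          have hcS : col n m v.val = x m (row n m w.val + 1) := by
            rw [hv, hSeq]
            exact col_S hm2 h2m ha1
          have hstep := S_step2 (n := n) (q := row n m w.val) hm h2m
          have hclast : col n m (S n m (row n m w.val + 1) - 1) = x m (row n m w.val + 1) :=
            col_last hm2 h2m (by omega)
          have hrlast : row n m (S n m (row n m w.val + 1) - 1) = row n m w.val :=
            row_unique hn hm (by omega) (by omega)
          have hieq : w.val = S n m (row n m w.val + 1) - 1 := by
            apply col_inj hm2 h2m hilt (by omega)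
            · rw [hrlast]
            · rw [hclast, ← hc2, hcS]
          exact key1 (by omega)
    · -- col (e1 v) = b, row v.val = a : case 4
      by_cases hr1 : row n m (e1 n v) = row n m w.val
      · exact key1 (col_inj hm2 h2m hj1lt hilt hr1 hc1)
      · have bj1 : S n m (row n m w.val) ≤ v.val := by rw [← hr2]; exact S_row_le hn hm
        have bj2 : v.val < S n m (row n m w.val + 1) := by rw [← hr2]; exact lt_S_row_succ hn hm
        by_cases h0 : v.val = 0
        · -- a = 0, e1 v = n - 1
          have hS1 : S n m 0 = 0 := S_zero hm
          have hrow0 : row n m 0 = 0 := by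
            have hst := S_step2 (n := n) (q := 0) hm h2m
            exact row_unique hn hm (by omega) (by omega)
          have ha0 : row n m w.val = 0 := by
            rw [← hr2, h0, hrow0]
          have hj1n : e1 n v = n - 1 := by
            rw [e1, h0, Nat.zero_add, Nat.mod_eq_of_lt (by omega)]
          have hclast : col n m (n - 1) = 0 := by
            have h := col_last (n := n) (q := m - 1) hm2 h2m (by omega)
            rw [Nat.sub_add_cancel (by omega), hSm, x_m] at h
            exact h
          have hcfirst : col n m 0 = 0 := by
            have h := col_S (n := n) (q := 0) hm2 h2m (by omega)
            rw [S_zero hm, x_zero hm2] at h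
            exact h
          have hieq : w.val = 0 := by
            apply col_inj hm2 h2m hilt (show 0 < n by omega)
            · rw [hrow0, ha0]
            · rw [hcfirst, ← hc1, hj1n, hclast]
          exact key2 (by omega)
        · have hj1v : e1 n v = v.val - 1 := by
            rw [e1, show v.val + (n - 1) = (v.val - 1) + n by omega, Nat.add_mod_right,
              Nat.mod_eq_of_lt (by omega)]
          have hvS : v.val = S n m (row n m w.val) := by
            by_contra hne
            refine hr1 ?_
            rw [hj1v]
            exact row_unique hn hm (by omega) (by omega)
          have hane : row n m w.val ≠ 0 := by
            intro h
            rw [h, S_zero hm] at hvS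
            omega
          have hstepa : S n m (row n m w.val - 1) + 2 ≤ S n m (row n m w.val) := by
            have h := S_step2 (n := n) (q := row n m w.val - 1) hm h2m
            rwa [Nat.sub_add_cancel (by omega)] at h
          have hclasta : col n m (S n m (row n m w.val) - 1) = x m (row n m w.val) := by
            have h := col_last (n := n) (q := row n m w.val - 1) hm2 h2m (by omega)
            rwa [Nat.sub_add_cancel (by omega)] at h
          have hcfirst : col n m (S n m (row n m w.val)) = x m (row n m w.val) :=
            col_S hm2 h2m halt
          have hrfirst : row n m (S n m (row n m w.val)) = row n m w.val := by
            have := S_step2 (n := n) (q := row n m w.val) hm h2m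
            exact row_unique hn hm le_rfl (by omega)
          have hieq : w.val = S n m (row n m w.val) := by
            apply col_inj hm2 h2m hilt (by omega)
            · rw [hrfirst]
            · rw [hcfirst, ← hc1, hj1v, hvS, hclasta]
          exact key2 (by omega)
    · exact key2 (col_inj hm2 h2m hj2lt hilt hr2 hc2)
  · rintro (rfl | rfl)
    · exact ⟨Or.inr rfl, Or.inr rfl⟩
    · rw [e1_add_one hn2]
      exact ⟨Or.inl rfl, Or.inl rfl⟩

end G
end Cyc

theorem cover_all (n m k : ℕ) [NeZero n] (hm2 : 2 ≤ m) (h2m : 2 * m ≤ n)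
    (hnmk : n ≤ m * k) (hmk : m ≤ k) (hcase : 3 ≤ k ∨ (k = 2 ∧ m % 2 = 0)) :
    TwoFoldCover (cycleGraph n)
      (fun j : Fin (2 * k) =>
        if (j : ℕ) < k then Cyc.G.HA n m j else Cyc.G.HB n m ((j : ℕ) - k)) := by
  have hmain : ∀ w : ZMod n, ∃ i j : Fin (2 * k), i ≠ j ∧
      (if (i : ℕ) < k then Cyc.G.HA n m i else Cyc.G.HB n m ((i : ℕ) - k)) ∩
      (if (j : ℕ) < k then Cyc.G.HA n m j else Cyc.G.HB n m ((j : ℕ) - k)) = {w, w + 1} := by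
    intro w
    have hrlt : Cyc.row n m w.val < k :=
      lt_of_lt_of_le (Cyc.row_lt (by omega) (by omega) w.val_lt) hmk
    have hclt : Cyc.col n m w.val < k := Cyc2.col_lt hm2 h2m hnmk hmk hcase w.val_lt
    refine ⟨⟨Cyc.row n m w.val, by omega⟩, ⟨k + Cyc.col n m w.val, by omega⟩, ?_, ?_⟩
    · intro h
      rw [Fin.mk.injEq] at h
      omega
    · rw [if_pos (show Cyc.row n m w.val < k from hrlt),
        if_neg (show ¬ k + Cyc.col n m w.val < k by omega),
        show k + Cyc.col n m w.val - k = Cyc.col n m w.val by omega]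
      exact Cyc.G.edge_cover hm2 h2m w
  intro u v hadj
  rw [cycleGraph, SimpleGraph.fromRel_adj] at hadj
  rcases hadj.2 with h | h
  · rw [h]
    exact hmain u
  · obtain ⟨i, j, hij, hIJ⟩ := hmain v
    refine ⟨i, j, hij, ?_⟩
    rw [hIJ, ← h]
    exact Finset.pair_comm v u

/-- For `n ≥ 3`, `ι(C_n) ≤ 2⌈√n⌉`. -/
theorem stmt16 (n : ℕ) (hn : 3 ≤ n) :
    coverNumber (cycleGraph n) ≤ 2 * ⌈Real.sqrt n⌉₊ := by
  rcases eq_or_lt_of_le hn with h3 | h4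
  · -- n = 3
    subst h3
    have hceil : ⌈Real.sqrt 3⌉₊ = 2 := by
      have h1 : (1 : ℝ) < Real.sqrt 3 := by
        rw [show (1 : ℝ) = Real.sqrt 1 by simp]
        exact Real.sqrt_lt_sqrt (by norm_num) (by norm_num)
      have h2 : Real.sqrt 3 ≤ 2 := by
        rw [show (2 : ℝ) = Real.sqrt 4 by
          rw [show (4 : ℝ) = 2 ^ 2 by norm_num, Real.sqrt_sq (by norm_num)]]
        exact Real.sqrt_le_sqrt (by norm_num)
      rw [Nat.ceil_eq_iff (by norm_num)]
      constructor
      · push_cast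
        exact h1
      · push_cast
        exact h2
    rw [show ((3 : ℕ) : ℝ) = (3 : ℝ) by norm_num, hceil]
    have hcov : TwoFoldCover (cycleGraph 3)
        (![{0, 1}, {1, 2}, {2, 0}, {0, 1, 2}] : Fin 4 → Finset (ZMod 3)) := by
      intro u v hadj
      rw [cycleGraph, SimpleGraph.fromRel_adj] at hadj
      revert hadj
      revert u v
      decide
    exact Nat.sInf_le ⟨_, hcov⟩
  · -- n ≥ 4
    have hn4 : 4 ≤ n := h4
    set k := ⌈Real.sqrt n⌉₊ with hk
    have h0 : (0 : ℝ) ≤ (n : ℝ) := Nat.cast_nonneg n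
    have hk1 : n ≤ k * k := by
      have h := Nat.le_ceil (Real.sqrt n)
      have hh : (n : ℝ) ≤ (k : ℝ) * k := by
        nlinarith [Real.sq_sqrt h0, Real.sqrt_nonneg (n : ℝ)]
      exact_mod_cast hh
    have hk2 : 2 ≤ k := by
      have h1 : (1 : ℝ) < Real.sqrt n := by
        rw [show (1 : ℝ) = Real.sqrt 1 by simp]
        exact Real.sqrt_lt_sqrt (by norm_num) (by exact_mod_cast (by omega : 1 < n))
      have : (1 : ℕ) < k := Nat.lt_ceil.2 (by push_cast; exact h1)
      omega
    have hk2g : (k - 1) * (k - 1) < n := by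
      have h := Nat.lt_ceil.1 (show k - 1 < k by omega)
      have hh : ((k - 1 : ℕ) : ℝ) * ((k - 1 : ℕ) : ℝ) < (n : ℝ) := by
        nlinarith [Real.sq_sqrt h0, Nat.cast_nonneg (α := ℝ) (k - 1)]
      exact_mod_cast hh
    have hkn : k < n := by
      by_contra hle
      push_neg at hle
      have e1 : (n - 1) * (n - 1) ≤ (k - 1) * (k - 1) :=
        Nat.mul_le_mul (by omega) (by omega)
      have e2 : 2 * (n - 1) ≤ (n - 1) * (n - 1) :=
        Nat.mul_le_mul_right (n - 1) (by omega)
      omega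
    set m := (n + k - 1) / k with hm
    have hdm := Nat.div_add_mod (n + k - 1) k
    have hrk : (n + k - 1) % k < k := Nat.mod_lt _ (by omega)
    rw [← hm] at hdm
    have hnmk : n ≤ m * k := by
      have e : m * k = k * m := Nat.mul_comm _ _
      omega
    have hm2 : 2 ≤ m := by
      by_contra hle
      push_neg at hle
      have : k * m ≤ k * 1 := Nat.mul_le_mul_left k (by omega)
      omega
    have hmk : m ≤ k := by
      by_contra hgt
      push_neg at hgt
      have e1 : k * (k + 1) ≤ k * m := Nat.mul_le_mul_left k hgt
      have e2 : k * (k + 1) = k * k + k := by ring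
      omega
    have hsplit : 3 ≤ k ∨ (k = 2 ∧ n = 4 ∧ m = 2) := by
      rcases le_or_gt 3 k with h | h
      · exact Or.inl h
      · have hke : k = 2 := by omega
        have hn4' : n = 4 := by
          rw [hke] at hk1
          omega
        have hme : m = 2 := by
          rw [hke, hn4'] at hm
          norm_num at hm
          omega
        exact Or.inr ⟨hke, hn4', hme⟩
    have h2m : 2 * m ≤ n := by
      rcases hsplit with h | ⟨hke, hn4', hme⟩
      · have ha : n * 2 ≤ n * (k - 1) := Nat.mul_le_mul_left n (by omega)
        have hb : 2 * (k - 1) ≤ (k - 1) * (k - 1) := Nat.mul_le_mul_right (k - 1) (by omega)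
        have hc : n * k = n * (k - 1) + n := by
          calc n * k = n * ((k - 1) + 1) := by rw [Nat.sub_add_cancel (by omega)]
            _ = n * (k - 1) + n := by ring
        have hkey : 2 * (n + k - 1) ≤ n * k := by omega
        refine Nat.le_of_mul_le_mul_right ?_ (show 0 < k by omega)
        have he : (2 * m) * k = 2 * (k * m) := by ring
        omega
      · omega
    haveI : NeZero n := ⟨by omega⟩
    have hcase : 3 ≤ k ∨ (k = 2 ∧ m % 2 = 0) := by
      rcases hsplit with h | ⟨h1, h2, h3⟩
      · exact Or.inl h
      · exact Or.inr ⟨h1, by omega⟩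
    exact Nat.sInf_le ⟨_, cover_all n m k hm2 h2m hnmk hmk hcase⟩
end

section
/- For every integer n ≥ 3, the inequality 2⌈√n⌉ ≤ ⌈√2 · ⌈(5 + √(8(n−2)+1))/2⌉ − 2⌉ holds. -/
set_option maxHeartbeats 1000000


/-- For every integer `n ≥ 3`,
`2⌈√n⌉ ≤ ⌈√2 ⌈(5 + √(8(n-2)+1))/2⌉ - 2⌉`. -/
theorem stmt17 (n : ℕ) (hn : 3 ≤ n) :
    (2 * ⌈Real.sqrt n⌉ : ℤ) ≤
      ⌈Real.sqrt 2 * (⌈(5 + Real.sqrt (8 * ((n : ℝ) - 2) + 1)) / 2⌉ : ℤ) - 2⌉ := by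
  set s : ℤ := ⌈Real.sqrt n⌉ with hs
  set m : ℤ := ⌈(5 + Real.sqrt (8 * ((n : ℝ) - 2) + 1)) / 2⌉ with hm
  have hn3 : (3 : ℝ) ≤ (n : ℝ) := by exact_mod_cast hn
  have harg0 : (0 : ℝ) ≤ 8 * ((n : ℝ) - 2) + 1 := by linarith
  have hA := Real.sq_sqrt harg0
  have hAnn := Real.sqrt_nonneg (8 * ((n : ℝ) - 2) + 1)
  have hsq3 : (3 : ℝ) ≤ Real.sqrt (8 * ((n : ℝ) - 2) + 1) := by
    nlinarith [hA, hAnn]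
  have hmreal : (5 + Real.sqrt (8 * ((n : ℝ) - 2) + 1)) / 2 ≤ (m : ℝ) :=
    Int.le_ceil _
  have hm4 : (4 : ℤ) ≤ m := by
    have : (4 : ℝ) ≤ (m : ℝ) := by linarith
    exact_mod_cast this
  have hNnn := Real.sqrt_nonneg (n : ℝ)
  have hN := Real.sq_sqrt (show (0:ℝ) ≤ (n:ℝ) by positivity)
  have hs2 : (2 : ℤ) ≤ s := by
    have h1 : (1 : ℝ) < Real.sqrt n := by nlinarith [hN, hNnn]
    have : (1 : ℤ) < s := by
      rw [hs]
      exact Int.lt_ceil.mpr (by exact_mod_cast h1)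
    omega
  have key : 2 * s ^ 2 + 2 * s + 1 ≤ m ^ 2 := by
    rcases eq_or_lt_of_le hs2 with h2 | h3
    · nlinarith [hm4, h2.symm]
    · have hs3 : (3 : ℤ) ≤ s := h3
      have hs3r : (3 : ℝ) ≤ (s : ℝ) := by exact_mod_cast hs3
      -- n > (s-1)^2
      have hlt : ((s : ℝ) - 1) < Real.sqrt n := by
        have h := Int.lt_ceil.mp (show s - 1 < ⌈Real.sqrt n⌉ by omega)
        push_cast at h
        linarith
      have hn_lb : ((s : ℝ) - 1) ^ 2 < (n : ℝ) := by
        nlinarith [hlt, hN, hNnn, hs3r]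
      have hn_int : (s - 1) ^ 2 + 1 ≤ (n : ℤ) := by
        have : ((s : ℝ) - 1) ^ 2 < ((n : ℤ) : ℝ) := by push_cast; linarith
        have h2 : (s - 1) ^ 2 < (n : ℤ) := by exact_mod_cast this
        omega
      have hn_lbr : ((s : ℝ)) ^ 2 - 2 * s + 2 ≤ (n : ℝ) := by
        have : ((s - 1) ^ 2 + 1 : ℤ) ≤ (n : ℤ) := hn_int
        have := (by exact_mod_cast this : (((s : ℝ) - 1) ^ 2 + 1) ≤ (n : ℝ))
        nlinarith [this]
      -- sqrt(8(n-2)+1) ≥ sqrt(8s^2-16s+1)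
      have hBarg : (0 : ℝ) ≤ 8 * (s : ℝ) ^ 2 - 16 * s + 1 := by nlinarith [hs3r]
      have hmono : Real.sqrt (8 * (s : ℝ) ^ 2 - 16 * s + 1)
          ≤ Real.sqrt (8 * ((n : ℝ) - 2) + 1) :=
        Real.sqrt_le_sqrt (by linarith)
      set a := Real.sqrt (8 * (s : ℝ) ^ 2 - 16 * s + 1) with ha
      have haSq := Real.sq_sqrt hBarg
      have hann := Real.sqrt_nonneg (8 * (s : ℝ) ^ 2 - 16 * s + 1)
      -- 10 a ≥ 24 s - 22
      have h10a : 24 * (s : ℝ) - 22 ≤ 10 * a := by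
        nlinarith [haSq, hann, hs3r, sq_nonneg (10 * a - (24 * (s:ℝ) - 22)), mul_nonneg hann hann]
      -- m ≥ (5 + a)/2 and (5+a)^2 ≥ 4(2s^2+2s+1)
      have hmr : (5 + a) / 2 ≤ (m : ℝ) := by linarith [hmono, hmreal]
      have hkeyR : 2 * (s : ℝ) ^ 2 + 2 * s + 1 ≤ (m : ℝ) ^ 2 := by
        nlinarith [hmr, haSq, hann, h10a, hs3r]
      exact_mod_cast hkeyR
  -- conclude
  have h2 := Real.sq_sqrt (show (0:ℝ) ≤ 2 by norm_num)
  have h2nn := Real.sqrt_nonneg 2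
  have hmr0 : (0 : ℝ) ≤ (m : ℝ) := by exact_mod_cast (by omega : (0:ℤ) ≤ m)
  have hsr : (2 * (s : ℝ) + 1) < Real.sqrt 2 * (m : ℝ) := by
    have hk : (2 * (s : ℝ) ^ 2 + 2 * s + 1) ≤ (m : ℝ) ^ 2 := by exact_mod_cast key
    have hsr0 : (2 : ℝ) ≤ (s : ℝ) := by exact_mod_cast hs2
    nlinarith [hk, h2, h2nn, hmr0, hsr0, mul_nonneg h2nn hmr0]
  have : (2 * s - 1 : ℤ) < ⌈Real.sqrt 2 * (m : ℝ) - 2⌉ := by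
    apply Int.lt_ceil.mpr
    push_cast
    linarith
  omega
end
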